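/- Let ρ1, ρ2 ∈ (0,1), let m be a positive integer, and let m1, m2 be positive integers with m1 + m2 = m and |m1 − m·log ρ2/(log ρ1 + log ρ2)| ≤ 1/2. Set ρ = exp( (log ρ1 · log ρ2)/(log ρ1 + log ρ2) ). Let Z1 be a monic polynomial of degree m1 with real coefficients, all roots in [√(−b1), √(−a1)], and sup_{u ∈ [√(−b1),√(−a1)]} |Z1(u)/Z1(−u)| ≤ 2·ρ1^{m1}; let Z2 be a monic polynomial of degree m2 with real coefficients, all roots in [√(a2), √(b2)], and sup_{u ∈ [√(a2),√(b2)]} |Z2(u)/Z2(−u)| ≤ 2·ρ2^{m2}. Define H(s) = Z1(−i s)·Z2(s). Then H(−s) ≠ 0 for every s ∈ K̃ and sup_{s ∈ K̃} |H(s)/H(−s)| ≤ 2·max{ρ1^{−1/2}, ρ2^{−1/2}}·ρ^m. -/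

import Mathlib

/-- The segment of the positive imaginary axis `{ i·u : u ∈ [√(−b1), √(−a1)] }`. -/
noncomputable def Kt1 (a1 b1 : ℝ) : Set ℂ :=
  (fun u : ℝ => Complex.I * (u : ℂ)) '' Set.Icc (Real.sqrt (-b1)) (Real.sqrt (-a1))

/-- The segment of the positive real axis `[√(a2), √(b2)]`. -/
noncomputable def Kt2 (a2 b2 : ℝ) : Set ℂ :=
  (fun u : ℝ => (u : ℂ)) '' Set.Icc (Real.sqrt a2) (Real.sqrt b2)

/-!
On `i·[√(−b1), √(−a1)]` the factor `Z2(s)` of `H(s) = Z1(−i s) Z2(s)` and its partner `Z2(−s)`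
are complex conjugates, so `|H(s)/H(−s)| = |Z1(u)/Z1(−u)|` with `s = i u`; symmetrically on
`[√a2, √b2]` the `Z1` factors cancel in modulus and `|H(s)/H(−s)| = |Z2(s)/Z2(−s)|`. All roots being
positive reals, none of these values vanishes. The balancing condition on `m1` then gives
`ρ1^m1 ≤ ρ1^(−1/2) ρ^m` and `ρ2^m2 ≤ ρ2^(−1/2) ρ^m`.
-/

open Complex ComplexConjugate Polynomial Set

lemma aeval_complex_ofReal (p : ℝ[X]) (x : ℝ) : aeval (x : ℂ) p = p.eval x :=
  aeval_ofReal p x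

def AllRootsPositive (p : ℝ[X]) : Prop :=
  ∀ z : ℂ, aeval z p = 0 → ∃ x : ℝ, 0 < x ∧ z = x

lemma allRootsPositive_of_roots_mem_Icc {p : ℝ[X]} {c d : ℝ} (hc : 0 < c)
    (h : ∀ z : ℂ, aeval z p = 0 → ∃ x ∈ Icc c d, z = x) : AllRootsPositive p := by
  intro z hz
  obtain ⟨x, hx, rfl⟩ := h z hz
  exact ⟨x, hc.trans_le hx.1, rfl⟩

namespace AllRootsPositive

variable {p : ℝ[X]} (hp : AllRootsPositive p)
include hp

lemma eval_ne_zero_of_nonpos {x : ℝ} (hx : x ≤ 0) : p.eval x ≠ 0 := by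
  intro h
  obtain ⟨y, hy, hxy⟩ := hp x (by rw [aeval_complex_ofReal, h, ofReal_zero])
  have : x = y := by exact_mod_cast hxy
  linarith

lemma aeval_ne_zero_of_im_ne_zero {z : ℂ} (hz : z.im ≠ 0) : aeval z p ≠ 0 := by
  intro h
  obtain ⟨y, -, rfl⟩ := hp z h
  exact hz (ofReal_im y)

end AllRootsPositive

lemma norm_aeval_conj (p : ℝ[X]) (z : ℂ) : ‖aeval (conj z) p‖ = ‖aeval z p‖ := by
  rw [aeval_conj, norm_conj]

lemma norm_mul_div_mul_of_norm_eq {a b c d : ℂ} (hbd : ‖b‖ = ‖d‖) (hd : d ≠ 0) :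
    ‖a * b / (c * d)‖ = ‖a / c‖ := by
  rw [norm_div, norm_mul, norm_mul, hbd, mul_div_mul_right _ _ (norm_ne_zero_iff.mpr hd),
    norm_div]

/-- The function `H(s) = Z1(−i s) Z2(s)`. -/
noncomputable def crossEval (p q : ℝ[X]) (s : ℂ) : ℂ :=
  aeval (-(I * s)) p * aeval s q

section crossEval

variable {p q : ℝ[X]} {u : ℝ}

lemma conj_I_mul_ofReal : conj (I * u) = -(I * u) := by
  simp [conj_I]

lemma crossEval_I_mul : crossEval p q (I * u) = p.eval u * aeval (I * u) q := by
  have : -(I * (I * u)) = (u : ℂ) := by linear_combination (-(u : ℂ)) * I_mul_I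
  rw [crossEval, this, aeval_complex_ofReal]

lemma crossEval_neg_I_mul : crossEval p q (-(I * u)) = p.eval (-u) * aeval (-(I * u)) q := by
  have : -(I * -(I * u)) = ((-u : ℝ) : ℂ) := by push_cast; linear_combination (u : ℂ) * I_mul_I
  rw [crossEval, this, aeval_complex_ofReal]

lemma crossEval_ofReal : crossEval p q u = q.eval u * aeval (-(I * u)) p := by
  rw [crossEval, aeval_complex_ofReal, mul_comm]

lemma crossEval_neg_ofReal : crossEval p q (-u) = q.eval (-u) * aeval (I * u) p := by
  rw [crossEval, mul_neg, neg_neg, ← ofReal_neg, aeval_complex_ofReal, mul_comm]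

lemma crossEval_neg_I_mul_ne_zero (hp : AllRootsPositive p) (hq : AllRootsPositive q)
    (hu : 0 < u) : crossEval p q (-(I * u)) ≠ 0 := by
  rw [crossEval_neg_I_mul]
  refine mul_ne_zero (ofReal_ne_zero.mpr (hp.eval_ne_zero_of_nonpos (by linarith))) ?_
  exact hq.aeval_ne_zero_of_im_ne_zero (by simpa using hu.ne')

lemma crossEval_neg_ofReal_ne_zero (hp : AllRootsPositive p) (hq : AllRootsPositive q)
    (hu : 0 < u) : crossEval p q (-u) ≠ 0 := by
  rw [crossEval_neg_ofReal]
  refine mul_ne_zero (ofReal_ne_zero.mpr (hq.eval_ne_zero_of_nonpos (by linarith))) ?_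
  exact hp.aeval_ne_zero_of_im_ne_zero (by simpa using hu.ne')

lemma norm_crossEval_I_mul_div (hq : AllRootsPositive q) (hu : 0 < u) :
    ‖crossEval p q (I * u) / crossEval p q (-(I * u))‖ = |p.eval u / p.eval (-u)| := by
  rw [crossEval_I_mul, crossEval_neg_I_mul, norm_mul_div_mul_of_norm_eq, ← ofReal_div, norm_real,
    Real.norm_eq_abs]
  · rw [← conj_I_mul_ofReal, norm_aeval_conj]
  · exact hq.aeval_ne_zero_of_im_ne_zero (by simpa using hu.ne')

lemma norm_crossEval_ofReal_div (hp : AllRootsPositive p) (hu : 0 < u) :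
    ‖crossEval p q u / crossEval p q (-u)‖ = |q.eval u / q.eval (-u)| := by
  rw [crossEval_ofReal, crossEval_neg_ofReal, norm_mul_div_mul_of_norm_eq, ← ofReal_div, norm_real,
    Real.norm_eq_abs]
  · rw [← conj_I_mul_ofReal, norm_aeval_conj]
  · exact hp.aeval_ne_zero_of_im_ne_zero (by simpa using hu.ne')

lemma crossEval_ratio_le (hp : AllRootsPositive p) (hq : AllRootsPositive q)
    {c₁ d₁ c₂ d₂ C : ℝ} (hc₁ : 0 < c₁) (hc₂ : 0 < c₂)
    (hp_le : ∀ u ∈ Icc c₁ d₁, |p.eval u / p.eval (-u)| ≤ C)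
    (hq_le : ∀ u ∈ Icc c₂ d₂, |q.eval u / q.eval (-u)| ≤ C) :
    ∀ s ∈ (fun u : ℝ => I * (u : ℂ)) '' Icc c₁ d₁ ∪ (fun u : ℝ => (u : ℂ)) '' Icc c₂ d₂,
      crossEval p q (-s) ≠ 0 ∧ ‖crossEval p q s / crossEval p q (-s)‖ ≤ C := by
  rintro s (⟨u, hu, rfl⟩ | ⟨u, hu, rfl⟩)
  · have hu0 := hc₁.trans_le hu.1
    exact ⟨crossEval_neg_I_mul_ne_zero hp hq hu0,
      (norm_crossEval_I_mul_div hq hu0).trans_le (hp_le u hu)⟩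
  · have hu0 := hc₂.trans_le hu.1
    exact ⟨crossEval_neg_ofReal_ne_zero hp hq hu0,
      (norm_crossEval_ofReal_div hp hu0).trans_le (hq_le u hu)⟩

end crossEval

lemma abs_eval_div_eval_neg_le_of_sSup_le {p : ℝ[X]} (hp : AllRootsPositive p) {c d C : ℝ}
    (hc : 0 ≤ c) (h : sSup ((fun u : ℝ => |p.eval u / p.eval (-u)|) '' Icc c d) ≤ C) :
    ∀ u ∈ Icc c d, |p.eval u / p.eval (-u)| ≤ C := by
  have hcont : ContinuousOn (fun u : ℝ => |p.eval u / p.eval (-u)|) (Icc c d) :=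
    (p.continuous.continuousOn.div (p.continuous.comp continuous_neg).continuousOn
      fun u hu => hp.eval_ne_zero_of_nonpos (by linarith [hu.1])).abs
  exact fun u hu => (le_csSup (isCompact_Icc.bddAbove_image hcont) ⟨u, hu, rfl⟩).trans h

lemma pow_le_rpow_neg_half_mul_exp_pow {r : ℝ} (hr0 : 0 < r) (hr1 : r ≤ 1) (L : ℝ) {k m : ℕ}
    (hk : m * L / (Real.log r + L) - 1 / 2 ≤ k) :
    r ^ k ≤ r ^ (-(1 / 2) : ℝ) * Real.exp (Real.log r * L / (Real.log r + L)) ^ m := by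
  rw [← Real.exp_log (pow_pos hr0 k), Real.log_pow, Real.rpow_def_of_pos hr0, ← Real.exp_nat_mul,
    ← Real.exp_add, Real.exp_le_exp]
  calc k * Real.log r ≤ (m * L / (Real.log r + L) - 1 / 2) * Real.log r :=
        mul_le_mul_of_nonpos_right hk (Real.log_nonpos hr0.le hr1)
    _ = Real.log r * (-(1 / 2)) + m * (Real.log r * L / (Real.log r + L)) := by ring

lemma pow_le_max_rpow_neg_half_mul_exp_pow {ρ₁ ρ₂ : ℝ} (hρ₁ : ρ₁ ∈ Ioo (0 : ℝ) 1)
    (hρ₂ : ρ₂ ∈ Ioo (0 : ℝ) 1) {m m₁ m₂ : ℕ} (hm : m₁ + m₂ = m)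
    (hbal : |(m₁ : ℝ) - m * Real.log ρ₂ / (Real.log ρ₁ + Real.log ρ₂)| ≤ 1 / 2) :
    let M := max (ρ₁ ^ (-(1 / 2) : ℝ)) (ρ₂ ^ (-(1 / 2) : ℝ)) *
      Real.exp (Real.log ρ₁ * Real.log ρ₂ / (Real.log ρ₁ + Real.log ρ₂)) ^ m
    ρ₁ ^ m₁ ≤ M ∧ ρ₂ ^ m₂ ≤ M := by
  intro M
  have hE : 0 ≤ Real.exp (Real.log ρ₁ * Real.log ρ₂ / (Real.log ρ₁ + Real.log ρ₂)) ^ m := by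
    positivity
  obtain ⟨hlo, hhi⟩ := abs_le.mp hbal
  have hD : Real.log ρ₁ + Real.log ρ₂ ≠ 0 :=
    (add_neg (Real.log_neg hρ₁.1 hρ₁.2) (Real.log_neg hρ₂.1 hρ₂.2)).ne
  have hm_cast : (m : ℝ) = m₁ + m₂ := by exact_mod_cast hm.symm
  have hsplit : (m : ℝ) * Real.log ρ₁ / (Real.log ρ₂ + Real.log ρ₁) =
      m - m * Real.log ρ₂ / (Real.log ρ₁ + Real.log ρ₂) := by
    rw [add_comm (Real.log ρ₂)]; field_simp; ring
  have h₁ := pow_le_rpow_neg_half_mul_exp_pow hρ₁.1 hρ₁.2.le (Real.log ρ₂) (k := m₁) (m := m)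
    (by linarith)
  have h₂ := pow_le_rpow_neg_half_mul_exp_pow hρ₂.1 hρ₂.2.le (Real.log ρ₁) (k := m₂) (m := m)
    (by rw [hsplit]; linarith)
  rw [mul_comm (Real.log ρ₂), add_comm (Real.log ρ₂)] at h₂
  exact ⟨h₁.trans (mul_le_mul_of_nonneg_right (le_max_left _ _) hE),
    h₂.trans (mul_le_mul_of_nonneg_right (le_max_right _ _) hE)⟩

theorem stmt8_general (a1 b1 a2 b2 : ℝ) (hb1 : b1 < 0) (ha2 : 0 < a2)
    (ρ1 ρ2 : ℝ) (hρ1 : ρ1 ∈ Set.Ioo (0 : ℝ) 1) (hρ2 : ρ2 ∈ Set.Ioo (0 : ℝ) 1)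
    (m : ℕ) (m1 m2 : ℕ) (hm12 : m1 + m2 = m)
    (hbal : |(m1 : ℝ) - m * Real.log ρ2 / (Real.log ρ1 + Real.log ρ2)| ≤ 1 / 2)
    (ρ : ℝ) (hρ : ρ = Real.exp (Real.log ρ1 * Real.log ρ2 / (Real.log ρ1 + Real.log ρ2)))
    (Z1 Z2 : Polynomial ℝ)
    (hZ1roots : ∀ z : ℂ, Polynomial.aeval z Z1 = 0 →
      ∃ x ∈ Set.Icc (Real.sqrt (-b1)) (Real.sqrt (-a1)), z = (x : ℂ))
    (hZ1sup : sSup ((fun u : ℝ => |Z1.eval u / Z1.eval (-u)|) ''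
      Set.Icc (Real.sqrt (-b1)) (Real.sqrt (-a1))) ≤ 2 * ρ1 ^ m1)
    (hZ2roots : ∀ z : ℂ, Polynomial.aeval z Z2 = 0 →
      ∃ x ∈ Set.Icc (Real.sqrt a2) (Real.sqrt b2), z = (x : ℂ))
    (hZ2sup : sSup ((fun u : ℝ => |Z2.eval u / Z2.eval (-u)|) ''
      Set.Icc (Real.sqrt a2) (Real.sqrt b2)) ≤ 2 * ρ2 ^ m2)
    (H : ℂ → ℂ)
    (hH : ∀ s : ℂ, H s = (Z1.map (algebraMap ℝ ℂ)).eval (-(Complex.I * s)) *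
      (Z2.map (algebraMap ℝ ℂ)).eval s) :
    (∀ s ∈ Kt1 a1 b1 ∪ Kt2 a2 b2, H (-s) ≠ 0) ∧
    sSup ((fun s : ℂ => ‖H s / H (-s)‖) '' (Kt1 a1 b1 ∪ Kt2 a2 b2)) ≤
      2 * max (ρ1 ^ (-(1 / 2) : ℝ)) (ρ2 ^ (-(1 / 2) : ℝ)) * ρ ^ m := by
  obtain rfl : H = crossEval Z1 Z2 :=
    funext fun s => by simp only [hH, eval_map_algebraMap, crossEval]
  have hc1 : 0 < √(-b1) := Real.sqrt_pos.mpr (neg_pos.mpr hb1)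
  have hc2 : 0 < √a2 := Real.sqrt_pos.mpr ha2
  have hp1 := allRootsPositive_of_roots_mem_Icc hc1 hZ1roots
  have hp2 := allRootsPositive_of_roots_mem_Icc hc2 hZ2roots
  obtain ⟨hB1, hB2⟩ := pow_le_max_rpow_neg_half_mul_exp_pow hρ1 hρ2 hm12 hbal
  rw [← hρ, ← mul_le_mul_iff_of_pos_left (two_pos (α := ℝ)), ← mul_assoc] at hB1 hB2
  have hpointwise := crossEval_ratio_le hp1 hp2 hc1 hc2
    (fun u hu => (abs_eval_div_eval_neg_le_of_sSup_le hp1 hc1.le hZ1sup u hu).trans hB1)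
    (fun u hu => (abs_eval_div_eval_neg_le_of_sSup_le hp2 hc2.le hZ2sup u hu).trans hB2)
  refine ⟨fun s hs => (hpointwise s hs).1, Real.sSup_le ?_
    ((mul_nonneg zero_le_two (pow_nonneg hρ1.1.le m1)).trans hB1)⟩
  rintro _ ⟨s, hs, rfl⟩
  exact (hpointwise s hs).2

theorem stmt8 (a1 b1 a2 b2 : ℝ) (hab1 : a1 < b1) (hb1 : b1 < 0) (ha2 : 0 < a2)
    (hab2 : a2 < b2) (ρ1 ρ2 : ℝ) (hρ1 : ρ1 ∈ Set.Ioo (0 : ℝ) 1) (hρ2 : ρ2 ∈ Set.Ioo (0 : ℝ) 1)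
    (m : ℕ) (hm : 0 < m) (m1 m2 : ℕ) (hm1 : 0 < m1) (hm2 : 0 < m2) (hm12 : m1 + m2 = m)
    (hbal : |(m1 : ℝ) - m * Real.log ρ2 / (Real.log ρ1 + Real.log ρ2)| ≤ 1 / 2)
    (ρ : ℝ) (hρ : ρ = Real.exp (Real.log ρ1 * Real.log ρ2 / (Real.log ρ1 + Real.log ρ2)))
    (Z1 Z2 : Polynomial ℝ)
    (hZ1monic : Z1.Monic) (hZ1deg : Z1.natDegree = m1)
    (hZ1roots : ∀ z : ℂ, Polynomial.aeval z Z1 = 0 →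
      ∃ x ∈ Set.Icc (Real.sqrt (-b1)) (Real.sqrt (-a1)), z = (x : ℂ))
    (hZ1sup : sSup ((fun u : ℝ => |Z1.eval u / Z1.eval (-u)|) ''
      Set.Icc (Real.sqrt (-b1)) (Real.sqrt (-a1))) ≤ 2 * ρ1 ^ m1)
    (hZ2monic : Z2.Monic) (hZ2deg : Z2.natDegree = m2)
    (hZ2roots : ∀ z : ℂ, Polynomial.aeval z Z2 = 0 →
      ∃ x ∈ Set.Icc (Real.sqrt a2) (Real.sqrt b2), z = (x : ℂ))
    (hZ2sup : sSup ((fun u : ℝ => |Z2.eval u / Z2.eval (-u)|) ''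
      Set.Icc (Real.sqrt a2) (Real.sqrt b2)) ≤ 2 * ρ2 ^ m2)
    (H : ℂ → ℂ)
    (hH : ∀ s : ℂ, H s = (Z1.map (algebraMap ℝ ℂ)).eval (-(Complex.I * s)) *
      (Z2.map (algebraMap ℝ ℂ)).eval s) :
    (∀ s ∈ Kt1 a1 b1 ∪ Kt2 a2 b2, H (-s) ≠ 0) ∧
    sSup ((fun s : ℂ => ‖H s / H (-s)‖) '' (Kt1 a1 b1 ∪ Kt2 a2 b2)) ≤
      2 * max (ρ1 ^ (-(1 / 2) : ℝ)) (ρ2 ^ (-(1 / 2) : ℝ)) * ρ ^ m :=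
  stmt8_general a1 b1 a2 b2 hb1 ha2 ρ1 ρ2 hρ1 hρ2 m m1 m2 hm12 hbal ρ hρ Z1 Z2 hZ1roots hZ1sup
    hZ2roots hZ2sup H hH
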